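/- arXiv:2204.00031 — 2 statements merged into one kernel-verified Lean document; each statement's English description precedes it below -/
import Mathlib

section
/- Let λ > 0, y ∈ ℝ³ and Φ ∈ ℂ². Define ψ : ℝ³ → ℂ² by ψ(x) = U_{λ,y}(x)³ · (Φ − c((x − y)/λ)Φ). Then ψ is smooth and satisfies the Dirac eigen-equation Dψ(x) = (3/2)·U_{λ,y}(x)²·ψ(x) for all x ∈ ℝ³. (This is the flat-space form, obtained via stereographic projection, of the (−1/2)-Killing spinors on the round 3-sphere, cf. formula (2.4).) -/
noncomputable section

/-- Points of Euclidean `ℝ³`. -/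
abbrev R3 := EuclideanSpace ℝ (Fin 3)

/-- Spinors: `ℂ²` with its standard Hermitian inner product and norm. -/
abbrev Spinor := EuclideanSpace ℂ (Fin 2)

/-- The standard bubble `U_{λ,y}(x) = (2λ/(λ² + ‖x − y‖²))^(1/2)`. -/
def bubble (l : ℝ) (y : R3) (x : R3) : ℝ :=
  Real.sqrt (2 * l / (l ^ 2 + ‖x - y‖ ^ 2))

/-- Pauli matrix `σ₁`. -/
def pauli1 : Matrix (Fin 2) (Fin 2) ℂ := !![0, 1; 1, 0]

/-- Pauli matrix `σ₂`. -/
def pauli2 : Matrix (Fin 2) (Fin 2) ℂ := !![0, -Complex.I; Complex.I, 0]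

/-- Pauli matrix `σ₃`. -/
def pauli3 : Matrix (Fin 2) (Fin 2) ℂ := !![1, 0; 0, -1]

/-- Clifford multiplication by `v ∈ ℝ³`: the matrix `c(v) = −i(v₁σ₁ + v₂σ₂ + v₃σ₃)`. -/
def cliffordMatrix (v : R3) : Matrix (Fin 2) (Fin 2) ℂ :=
  (-Complex.I) • ((v 0 : ℂ) • pauli1 + (v 1 : ℂ) • pauli2 + (v 2 : ℂ) • pauli3)

/-- The action of `c(v)` on a spinor. -/
def cliffordMul (v : R3) (φ : Spinor) : Spinor :=
  (WithLp.equiv 2 (Fin 2 → ℂ)).symm ((cliffordMatrix v).mulVec (WithLp.equiv 2 (Fin 2 → ℂ) φ))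

/-- The flat Dirac operator `(Dψ)(x) = ∑_{j=1}^3 c(e_j) ∂ψ/∂x_j(x)`. -/
def Dirac (ψ : R3 → Spinor) (x : R3) : Spinor :=
  ∑ j : Fin 3,
    cliffordMul (EuclideanSpace.single j 1) (fderiv ℝ ψ x (EuclideanSpace.single j 1))

/-- The ground-state spinor `ψ(x) = U_{λ,y}(x)³·(Φ − c((x − y)/λ)Φ)`. -/
def groundSpinor (l : ℝ) (y : R3) (Φ : Spinor) (x : R3) : Spinor :=
  (bubble l y x ^ 3 : ℝ) • (Φ - cliffordMul (l⁻¹ • (x - y)) Φ)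

lemma cliffordMul_apply0 (v : R3) (φ : Spinor) :
    cliffordMul v φ 0 = (-Complex.I * v 2) * φ 0 + (-Complex.I * v 0 - v 1) * φ 1 := by
  simp [cliffordMul, cliffordMatrix, pauli1, pauli2, pauli3, Matrix.mulVec, dotProduct,
    Fin.sum_univ_two]
  linear_combination ((v 1 : ℂ) * φ 1) * Complex.I_sq

lemma cliffordMul_apply1 (v : R3) (φ : Spinor) :
    cliffordMul v φ 1 = (-Complex.I * v 0 + v 1) * φ 0 + (Complex.I * v 2) * φ 1 := by
  simp [cliffordMul, cliffordMatrix, pauli1, pauli2, pauli3, Matrix.mulVec, dotProduct,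
    Fin.sum_univ_two]
  linear_combination (-(v 1 : ℂ) * φ 0) * Complex.I_sq

lemma norm_sq_R3 (v : R3) : ‖v‖ ^ 2 = v 0 ^ 2 + v 1 ^ 2 + v 2 ^ 2 := by
  rw [EuclideanSpace.norm_eq, Real.sq_sqrt (by positivity)]
  simp [Fin.sum_univ_three, sq_abs]

lemma cliffordMul_smul_spinor (v : R3) (a : ℝ) (φ : Spinor) :
    cliffordMul v (a • φ) = a • cliffordMul v φ := by
  ext i
  fin_cases i <;>
    simp [cliffordMul_apply0, cliffordMul_apply1, Complex.real_smul] <;> ring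

lemma cliffordMul_sub_spinor (v : R3) (φ η : Spinor) :
    cliffordMul v (φ - η) = cliffordMul v φ - cliffordMul v η := by
  ext i
  fin_cases i <;>
    simp [cliffordMul_apply0, cliffordMul_apply1] <;> ring

lemma cliffordMul_neg_spinor (v : R3) (φ : Spinor) :
    cliffordMul v (-φ) = -cliffordMul v φ := by
  ext i
  fin_cases i <;>
    simp [cliffordMul_apply0, cliffordMul_apply1] <;> ring

lemma cliffordMul_add_left (v w : R3) (φ : Spinor) :
    cliffordMul (v + w) φ = cliffordMul v φ + cliffordMul w φ := by
  ext i
  fin_cases i <;>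
    simp [cliffordMul_apply0, cliffordMul_apply1] <;> ring

lemma cliffordMul_smul_left (a : ℝ) (v : R3) (φ : Spinor) :
    cliffordMul (a • v) φ = a • cliffordMul v φ := by
  ext i
  fin_cases i <;>
    simp [cliffordMul_apply0, cliffordMul_apply1, Complex.real_smul] <;> push_cast <;> ring

lemma cliffordMul_sq (v : R3) (φ : Spinor) :
    cliffordMul v (cliffordMul v φ) = (-(‖v‖ ^ 2) : ℝ) • φ := by
  ext i
  fin_cases i <;>
    rw [show ((-(‖v‖ ^ 2) : ℝ) : ℝ) = -(v 0 ^ 2 + v 1 ^ 2 + v 2 ^ 2) by rw [norm_sq_R3]] <;>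
    simp [cliffordMul_apply0, cliffordMul_apply1, Complex.real_smul] <;> push_cast
  · linear_combination (((v 0 : ℂ) ^ 2 + (v 2 : ℂ) ^ 2) * φ 0) * Complex.I_sq
  · linear_combination (((v 0 : ℂ) ^ 2 + (v 2 : ℂ) ^ 2) * φ 1) * Complex.I_sq

lemma sum_smul_cliff (a : ℝ) (v : R3) (ζ : Spinor) :
    ∑ j : Fin 3, (a * v j) • cliffordMul (EuclideanSpace.single j 1) ζ
      = a • cliffordMul v ζ := by
  ext i
  fin_cases i <;>
    simp [Fin.sum_univ_three, cliffordMul_apply0, cliffordMul_apply1,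
      EuclideanSpace.single_apply, Complex.real_smul] <;> push_cast <;> ring

def cliffCLM (Φ : Spinor) : R3 →L[ℝ] Spinor :=
  LinearMap.toContinuousLinearMap
    { toFun := fun v => cliffordMul v Φ
      map_add' := fun v w => cliffordMul_add_left v w Φ
      map_smul' := fun a v => cliffordMul_smul_left a v Φ }

@[simp] lemma cliffCLM_apply (Φ : Spinor) (v : R3) : cliffCLM Φ v = cliffordMul v Φ := rfl

/-- Let `λ > 0`, `y ∈ ℝ³`, `Φ ∈ ℂ²`. The spinor `ψ(x) = U_{λ,y}(x)³·(Φ − c((x − y)/λ)Φ)` is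
smooth and satisfies the Dirac eigen-equation `Dψ = (3/2)·U_{λ,y}²·ψ` on all of `ℝ³`. -/
theorem groundSpinor_smooth_and_dirac_equation (l : ℝ) (hl : 0 < l) (y : R3) (Φ : Spinor) :
    ContDiff ℝ (⊤ : ℕ∞) (groundSpinor l y Φ) ∧
      ∀ x : R3,
        Dirac (groundSpinor l y Φ) x
          = ((3 / 2) * bubble l y x ^ 2 : ℝ) • groundSpinor l y Φ x := by
  constructor
  · -- smoothness
    have hg : ∀ x : R3, l ^ 2 + ‖x - y‖ ^ 2 ≠ 0 := fun x => by positivity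
    have h1 : ContDiff ℝ (⊤ : ℕ∞) (fun x : R3 => bubble l y x ^ 3) := by
      apply ContDiff.pow
      apply ContDiff.sqrt _ fun x => by positivity
      exact contDiff_const.div (contDiff_const.add ((contDiff_id.sub contDiff_const).norm_sq ℝ)) hg
    have h2 : ContDiff ℝ (⊤ : ℕ∞) (fun x : R3 => Φ - cliffordMul (l⁻¹ • (x - y)) Φ) := by
      refine contDiff_const.sub ?_
      have : (fun x : R3 => cliffordMul (l⁻¹ • (x - y)) Φ)
          = fun x : R3 => cliffCLM Φ (l⁻¹ • (x - y)) := by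
        funext x; exact (cliffCLM_apply Φ _).symm
      rw [this]
      exact (cliffCLM Φ).contDiff.comp ((contDiff_id.sub contDiff_const).const_smul l⁻¹)
    exact h1.smul h2
  · intro x
    obtain ⟨g, hgdef⟩ : ∃ g : ℝ, g = l ^ 2 + ‖x - y‖ ^ 2 := ⟨_, rfl⟩
    have hg : 0 < g := by rw [hgdef]; positivity
    have hgne : g ≠ 0 := hg.ne'
    have hlne : l ≠ 0 := hl.ne'
    obtain ⟨t, htdef⟩ : ∃ t : ℝ, t = 2 * l / g := ⟨_, rfl⟩
    have ht : 0 < t := by rw [htdef]; positivity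
    obtain ⟨u, hudef⟩ : ∃ u : ℝ, u = Real.sqrt t := ⟨_, rfl⟩
    have hu : 0 < u := hudef ▸ Real.sqrt_pos.2 ht
    have hune : u ≠ 0 := hu.ne'
    have hu2 : u ^ 2 = t := hudef ▸ Real.sq_sqrt ht.le
    have hbu : bubble l y x = u := by rw [hudef, htdef, hgdef]; rfl
    -- derivative of z ↦ ‖z - y‖²
    have hq : HasFDerivAt (fun z : R3 => ‖z - y‖ ^ 2)
        (2 • (innerSL ℝ (x - y)).comp (ContinuousLinearMap.id ℝ R3)) x := by
      have := ((hasFDerivAt_id x).sub_const y).norm_sq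
      simpa using this
    have hd1 : HasDerivAt (fun s : ℝ => l ^ 2 + s) 1 (‖x - y‖ ^ 2) :=
      (hasDerivAt_id _).const_add (l ^ 2)
    have hd2 : HasDerivAt (fun s : ℝ => 2 * l / (l ^ 2 + s))
        ((0 * g - 2 * l * 1) / g ^ 2) (‖x - y‖ ^ 2) := by
      rw [hgdef]
      exact (hasDerivAt_const _ (2 * l)).div hd1 (hgdef ▸ hgne)
    have hd3 : HasDerivAt (fun s : ℝ => Real.sqrt (2 * l / (l ^ 2 + s)))
        ((0 * g - 2 * l * 1) / g ^ 2 / (2 * u)) (‖x - y‖ ^ 2) := by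
      have h := hd2.sqrt (by rw [hgdef] at htdef; rw [← htdef]; exact ht.ne')
      rw [show Real.sqrt (2 * l / (l ^ 2 + ‖x - y‖ ^ 2)) = u by
        rw [hudef, htdef, hgdef]] at h
      exact h
    have hd4 := hd3.pow 3
    obtain ⟨c0, hc0d⟩ : ∃ c : ℝ,
        c = ((3 : ℕ) : ℝ) * u ^ (3 - 1) * ((0 * g - 2 * l * 1) / g ^ 2 / (2 * u)) := ⟨_, rfl⟩
    have hc0 : c0 = -3 * l * u / g ^ 2 := by
      rw [hc0d]
      field_simp
      ring
    have hF : HasFDerivAt (fun z : R3 => bubble l y z ^ 3)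
        (c0 • (2 • (innerSL ℝ (x - y)).comp (ContinuousLinearMap.id ℝ R3))) x := by
      rw [hc0d]
      have h := hd4.comp_hasFDerivAt x hq
      rw [show Real.sqrt (2 * l / (l ^ 2 + ‖x - y‖ ^ 2)) = u by
        rw [hudef, htdef, hgdef]] at h
      exact h
    have hm : HasFDerivAt (fun z : R3 => Φ - cliffCLM Φ (l⁻¹ • (z - y)))
        (-((cliffCLM Φ).comp (l⁻¹ • ContinuousLinearMap.id ℝ R3))) x := by
      refine HasFDerivAt.const_sub ?_ Φ
      exact (cliffCLM Φ).hasFDerivAt.comp x (((hasFDerivAt_id x).sub_const y).const_smul l⁻¹)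
    have hψ : HasFDerivAt (groundSpinor l y Φ)
        ((bubble l y x ^ 3) • (-((cliffCLM Φ).comp (l⁻¹ • ContinuousLinearMap.id ℝ R3))) +
          (c0 • (2 • (innerSL ℝ (x - y)).comp (ContinuousLinearMap.id ℝ R3))).smulRight
            (Φ - cliffCLM Φ (l⁻¹ • (x - y)))) x := hF.smul hm
    -- the per-direction terms
    have hterm : ∀ j : Fin 3,
        cliffordMul (EuclideanSpace.single j 1)
          (fderiv ℝ (groundSpinor l y Φ) x (EuclideanSpace.single j 1))
        = (u ^ 3 * l⁻¹) • Φ +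
            ((2 * c0) * ((x - y) j)) •
              cliffordMul (EuclideanSpace.single j 1) (Φ - cliffordMul (l⁻¹ • (x - y)) Φ) := by
      intro j
      rw [hψ.fderiv]
      have hsingle : ((innerSL ℝ (x - y)) (EuclideanSpace.single j 1)) = (x - y) j := by
        simp [EuclideanSpace.inner_single_right, real_inner_comm]
      simp only [ContinuousLinearMap.add_apply, ContinuousLinearMap.smul_apply,
        ContinuousLinearMap.smulRight_apply, ContinuousLinearMap.neg_apply,
        ContinuousLinearMap.comp_apply, ContinuousLinearMap.coe_id', id_eq, cliffCLM_apply,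
        ContinuousLinearMap.coe_smul', Pi.smul_apply, hsingle]
      rw [cliffordMul_smul_left l⁻¹ (EuclideanSpace.single j 1) Φ]
      have expand : ∀ (a b : ℝ) (ζ η : Spinor),
          cliffordMul (EuclideanSpace.single j 1) (a • ζ + b • η)
            = a • cliffordMul (EuclideanSpace.single j 1) ζ
              + b • cliffordMul (EuclideanSpace.single j 1) η := by
        intro a b ζ η
        have := cliffordMul_sub_spinor (EuclideanSpace.single j 1) (a • ζ) (-(b • η))
        simpa [cliffordMul_smul_spinor, cliffordMul_neg_spinor, sub_neg_eq_add] using this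
      have hcomb : (bubble l y x ^ 3) • -(l⁻¹ • cliffordMul (EuclideanSpace.single j 1) Φ)
            + (c0 • (2 • ((x - y) j : ℝ))) • (Φ - cliffordMul (l⁻¹ • (x - y)) Φ)
          = (-(bubble l y x ^ 3 * l⁻¹)) • cliffordMul (EuclideanSpace.single j 1) Φ
            + ((2 * c0) * ((x - y) j)) • (Φ - cliffordMul (l⁻¹ • (x - y)) Φ) := by
        have h2 : (c0 • (2 • ((x - y) j : ℝ))) = (2 * c0) * ((x - y) j) := by
          simp [smul_eq_mul]; ring
        rw [h2]
        module
      rw [hcomb, expand]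
      rw [cliffordMul_sq]
      have hns : ‖EuclideanSpace.single j (1:ℝ)‖ ^ 2 = 1 := by
        norm_num [EuclideanSpace.norm_single]
      rw [hns, hbu]
      module
    -- sum up
    have hDirac : Dirac (groundSpinor l y Φ) x
        = (3 * (u ^ 3 * l⁻¹)) • Φ +
            (2 * c0) • cliffordMul (x - y) (Φ - cliffordMul (l⁻¹ • (x - y)) Φ) := by
      rw [Dirac]
      calc ∑ j : Fin 3, cliffordMul (EuclideanSpace.single j 1)
              (fderiv ℝ (groundSpinor l y Φ) x (EuclideanSpace.single j 1))
          = ∑ j : Fin 3, ((u ^ 3 * l⁻¹) • Φ +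
              ((2 * c0) * ((x - y) j)) •
                cliffordMul (EuclideanSpace.single j 1) (Φ - cliffordMul (l⁻¹ • (x - y)) Φ)) := by
            exact Finset.sum_congr rfl fun j _ => hterm j
        _ = (3 * (u ^ 3 * l⁻¹)) • Φ +
              (2 * c0) • cliffordMul (x - y) (Φ - cliffordMul (l⁻¹ • (x - y)) Φ) := by
            rw [Finset.sum_add_distrib, sum_smul_cliff, Finset.sum_const]
            simp [Finset.card_univ]
            module
    -- now pure module algebra
    have hw2 : ‖l⁻¹ • (x - y)‖ ^ 2 = (g - l ^ 2) / l ^ 2 := by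
      rw [norm_smul, hgdef]
      simp [mul_pow, abs_of_pos (inv_pos.2 hl)]
      field_simp
    rw [hDirac]
    have gen : ∀ w : R3, cliffordMul (l • w) (Φ - cliffordMul w Φ)
        = l • cliffordMul w Φ + (l * ‖w‖ ^ 2) • Φ := by
      intro w
      rw [cliffordMul_smul_left, cliffordMul_sub_spinor, cliffordMul_sq]
      module
    have hrw2 := gen (l⁻¹ • (x - y))
    rw [smul_inv_smul₀ hl.ne' (x - y), hw2] at hrw2
    rw [hrw2]
    have hrhs : groundSpinor l y Φ x = u ^ 3 • (Φ - cliffordMul (l⁻¹ • (x - y)) Φ) := by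
      simp only [groundSpinor, hbu]
    rw [hrhs, hbu]
    have e1 : (2 * c0) * l = -(3 / 2 * u ^ 2 * u ^ 3) := by
      rw [hc0]
      have h3 : u ^ 3 = u * u ^ 2 := by ring
      rw [h3, hu2, htdef]
      field_simp
    have e2 : 3 * (u ^ 3 * l⁻¹) + (2 * c0) * (l * ((g - l ^ 2) / l ^ 2))
        = 3 / 2 * u ^ 2 * u ^ 3 := by
      rw [hc0]
      have h3 : u ^ 3 = u * u ^ 2 := by ring
      rw [h3, hu2, htdef]
      field_simp
      ring
    match_scalars
    · linear_combination e2
    · linear_combination e1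
end
end

section
/- L³-norm of the ground-state spinor: let λ > 0, y ∈ ℝ³ and Φ ∈ ℂ² with ‖Φ‖² = 3λ/8, and set ψ(x) = U_{λ,y}(x)³·(Φ − c((x − y)/λ)Φ). Then ∫_{ℝ³} ‖ψ(x)‖³ dx = (3√3/4)·π². In particular the value is independent of λ and y, reflecting the conformal invariance of the spinorial L³-norm (formula (2.10)). -/
open MeasureTheory

noncomputable section

/-! `c(w)` is skew-Hermitian with `c(w)² = -‖w‖²`, so `‖Φ - c(w)Φ‖² = (1 + ‖w‖²)‖Φ‖²` and
`‖ψ(x)‖ = √3 λ / (λ² + ‖x - y‖²)`. After translating `y` to the origin, polar coordinates reduce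
the integral to `4π ∫₀^∞ r² / (λ² + r²)³ dr = π² / (4λ³)`, computed from an explicit antiderivative
involving `arctan (r / λ)`. -/

section SkewAdjoint

variable {𝕜 E : Type*} [RCLike 𝕜] [NormedAddCommGroup E] [InnerProductSpace 𝕜 E]
  [FiniteDimensional 𝕜 E]

open scoped InnerProductSpace

lemma norm_sub_apply_sq_of_adjoint_eq_neg {T : E →ₗ[𝕜] E} (hT : T.adjoint = -T) {a : ℝ}
    (hsq : ∀ x, T (T x) = -(a : 𝕜) • x) (x : E) :
    ‖x - T x‖ ^ 2 = (1 + a) * ‖x‖ ^ 2 := by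
  have skew : ∀ x y, ⟪T x, y⟫_𝕜 = -⟪x, T y⟫_𝕜 := fun x y => by
    rw [← LinearMap.adjoint_inner_left, hT]; simp
  have hre : RCLike.re ⟪x, T x⟫_𝕜 = 0 := by
    have := congrArg RCLike.re (skew x x)
    rw [← inner_conj_symm, RCLike.conj_re, map_neg] at this
    linarith
  have hTx : ‖T x‖ ^ 2 = a * ‖x‖ ^ 2 := by
    rw [← inner_self_eq_norm_sq (𝕜 := 𝕜), skew, hsq, neg_smul, inner_neg_right, neg_neg,
      inner_smul_right, RCLike.re_ofReal_mul, inner_self_eq_norm_sq]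
  rw [@norm_sub_sq 𝕜, hre, hTx]
  ring

end SkewAdjoint

lemma cliffordMatrix_conjTranspose (v : R3) :
    (cliffordMatrix v).conjTranspose = -cliffordMatrix v := by
  ext i j
  fin_cases i <;> fin_cases j <;> simp [cliffordMatrix, pauli1, pauli2, pauli3]

lemma cliffordMatrix_mul_self (v : R3) :
    cliffordMatrix v * cliffordMatrix v = -((‖v‖ ^ 2 : ℝ) : ℂ) • 1 := by
  rw [EuclideanSpace.norm_sq_eq]
  ext i j
  fin_cases i <;> fin_cases j <;>
    simp [cliffordMatrix, pauli1, pauli2, pauli3, Matrix.mul_apply, Fin.sum_univ_three, sq] <;>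
    ring_nf <;> simp <;> ring

lemma norm_sub_cliffordMul_sq (w : R3) (Φ : Spinor) :
    ‖Φ - cliffordMul w Φ‖ ^ 2 = (1 + ‖w‖ ^ 2) * ‖Φ‖ ^ 2 := by
  refine norm_sub_apply_sq_of_adjoint_eq_neg
    (T := Matrix.toEuclideanLin (cliffordMatrix w)) ?_ ?_ Φ
  · rw [← Matrix.toEuclideanLin_conjTranspose_eq_adjoint, cliffordMatrix_conjTranspose, map_neg]
  · intro x
    simp only [Matrix.toEuclideanLin, Matrix.toLpLin_apply, Matrix.mulVec_mulVec,
      cliffordMatrix_mul_self]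
    rw [Matrix.smul_mulVec, Matrix.one_mulVec]
    rfl

open Set Filter Topology in
lemma integral_Ioi_sq_div_sq_add_sq_pow_three {l : ℝ} (hl : 0 < l) :
    ∫ r in Ioi (0 : ℝ), r ^ 2 / (l ^ 2 + r ^ 2) ^ 3 = Real.pi / (16 * l ^ 3) := by
  set G : ℝ → ℝ := fun r => (r ^ 3 - l ^ 2 * r) / (8 * l ^ 2 * (l ^ 2 + r ^ 2) ^ 2)
  set F : ℝ → ℝ := fun r => Real.arctan (r / l) / (8 * l ^ 3) + G r
  have hderiv : ∀ r, HasDerivAt F (r ^ 2 / (l ^ 2 + r ^ 2) ^ 3) r := fun r => by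
    have h1 := ((Real.hasDerivAt_arctan (r / l)).comp r ((hasDerivAt_id r).div_const l)).div_const
      (8 * l ^ 3)
    have h2 := ((hasDerivAt_pow 3 r).fun_sub ((hasDerivAt_id' r).const_mul (l ^ 2))).fun_div
      ((((hasDerivAt_pow 2 r).const_add (l ^ 2)).fun_pow 2).const_mul (8 * l ^ 2))
      (by positivity)
    refine (h1.add h2).congr_deriv ?_
    field_simp
    ring
  -- `G r = g r⁻¹` with `g` continuous and `g 0 = 0`.
  have hG : Tendsto G atTop (𝓝 0) := by
    set g : ℝ → ℝ := fun t => t * (1 - l ^ 2 * t ^ 2) / (8 * l ^ 2 * (l ^ 2 * t ^ 2 + 1) ^ 2)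
    have hg : ContinuousAt g 0 := by
      refine ContinuousAt.div (by fun_prop) (by fun_prop) ?_
      positivity
    have := hg.tendsto.comp tendsto_inv_atTop_zero
    simp only [g, zero_mul, zero_div] at this
    refine this.congr' ?_
    filter_upwards [eventually_gt_atTop 0] with r hr
    simp only [Function.comp_apply, G]
    field_simp
  have hF : Tendsto F atTop (𝓝 (Real.pi / 2 / (8 * l ^ 3) + 0)) :=
    (((tendsto_nhds_of_tendsto_nhdsWithin Real.tendsto_arctan_atTop).comp
      (tendsto_id.atTop_div_const hl)).div_const _).add hG
  rw [integral_Ioi_of_hasDerivAt_of_nonneg (hderiv 0).continuousAt.continuousWithinAt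
    (fun r _ => hderiv r) (fun r _ => by positivity) hF]
  simp [F, G]
  ring

lemma integral_inv_sq_add_norm_sq_pow_three {l : ℝ} (hl : 0 < l) :
    ∫ x : R3, ((l ^ 2 + ‖x‖ ^ 2) ^ 3)⁻¹ = Real.pi ^ 2 / (4 * l ^ 3) := by
  rw [integral_fun_norm_addHaar volume fun r => ((l ^ 2 + r ^ 2) ^ 3)⁻¹,
    finrank_euclideanSpace_fin, measureReal_def, EuclideanSpace.volume_ball_fin_three]
  simp only [smul_eq_mul, ← div_eq_mul_inv, integral_Ioi_sq_div_sq_add_sq_pow_three hl,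
    ENNReal.ofReal_one, one_pow, one_mul, nsmul_eq_mul,
    ENNReal.toReal_ofReal (by positivity : 0 ≤ Real.pi * 4 / 3)]
  field_simp
  ring

lemma norm_groundSpinor {l : ℝ} (hl : 0 < l) (y : R3) (Φ : Spinor) (x : R3) :
    ‖groundSpinor l y Φ x‖ = Real.sqrt (8 * l) * ‖Φ‖ / (l ^ 2 + ‖x - y‖ ^ 2) := by
  have hD : 0 < l ^ 2 + ‖x - y‖ ^ 2 := by positivity
  have hbubble : bubble l y x ^ 2 = 2 * l / (l ^ 2 + ‖x - y‖ ^ 2) := Real.sq_sqrt (by positivity)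
  rw [← sq_eq_sq₀ (norm_nonneg _) (by positivity), groundSpinor, norm_smul, mul_pow,
    norm_sub_cliffordMul_sq, norm_smul, Real.norm_eq_abs, abs_pow, pow_right_comm, sq_abs, hbubble,
    Real.norm_of_nonneg (inv_nonneg.2 hl.le), div_pow _ (l ^ 2 + ‖x - y‖ ^ 2) 2,
    mul_pow (√(8 * l)), Real.sq_sqrt (by positivity)]
  field_simp
  ring

/-- `L³`-norm of the ground-state spinor: with `‖Φ‖² = 3λ/8` and
`ψ(x) = U_{λ,y}(x)³·(Φ − c((x − y)/λ)Φ)`, one has `∫_{ℝ³} ‖ψ‖³ dx = (3√3/4)·π²`; in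
particular the value is independent of `λ` and `y`. -/
theorem groundSpinor_L3_norm (l : ℝ) (hl : 0 < l) (y : R3) (Φ : Spinor)
    (hΦ : ‖Φ‖ ^ 2 = 3 * l / 8) :
    ∫ x : R3, ‖groundSpinor l y Φ x‖ ^ 3 = (3 * Real.sqrt 3 / 4) * Real.pi ^ 2 := by
  have hamplitude : Real.sqrt (8 * l) * ‖Φ‖ = Real.sqrt 3 * l := by
    rw [← sq_eq_sq₀ (by positivity) (by positivity), mul_pow, mul_pow, hΦ,
      Real.sq_sqrt (by positivity), Real.sq_sqrt (by norm_num)]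
    ring
  have hsqrt3 : Real.sqrt 3 ^ 3 = 3 * Real.sqrt 3 := by
    rw [pow_succ, Real.sq_sqrt (by norm_num)]
  have hpointwise : ∀ x, ‖groundSpinor l y Φ x‖ ^ 3
      = 3 * Real.sqrt 3 * l ^ 3 * ((l ^ 2 + ‖x - y‖ ^ 2) ^ 3)⁻¹ := fun x => by
    rw [norm_groundSpinor hl, hamplitude, div_pow, mul_pow, hsqrt3, div_eq_mul_inv]
  simp_rw [hpointwise]
  rw [integral_const_mul, integral_sub_right_eq_self (fun x => ((l ^ 2 + ‖x‖ ^ 2) ^ 3)⁻¹) y,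
    integral_inv_sq_add_norm_sq_pow_three hl]
  field_simp
end
end
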